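/- arXiv:2011.06166 — 4 statements merged into one kernel-verified Lean document; each statement's English description precedes it below -/
import Mathlib

section
/- If a random variable Z over {0,1}^n has a δ-dense ε-model with respect to a test class F (i.e., Z is ε-indistinguishable by F from some distribution M that is δ-dense in the uniform distribution), then Z is δ-dense in some distribution that is ε-pseudorandom for F (i.e., there exists a distribution X that is ε-indistinguishable from uniform by F such that the mixture X = δ·Z + (1-δ)·W for some distribution W). -/
open Finset

noncomputable section

/-- Real value of a boolean. -/
def bval (b : Bool) : ℝ := if b then 1 else 0

/-- Expectation of a boolean test under a (finitely supported) distribution on `{0,1}^n`. -/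
def Ex {n : ℕ} (μ : (Fin n → Bool) → ℝ) (f : (Fin n → Bool) → Bool) : ℝ :=
  ∑ z : Fin n → Bool, μ z * bval (f z)

/-- `μ` is a probability distribution on `{0,1}^n`. -/
def IsDist {n : ℕ} (μ : (Fin n → Bool) → ℝ) : Prop :=
  (∀ z, 0 ≤ μ z) ∧ ∑ z : Fin n → Bool, μ z = 1

/-- The uniform distribution on `{0,1}^n`. -/
def uni (n : ℕ) : (Fin n → Bool) → ℝ := fun _ => 1 / 2 ^ n

/-- The biased-coin product distribution `N_α`: each bit is 1 with probability `1/2 - α`. -/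
def coin (n : ℕ) (α : ℝ) : (Fin n → Bool) → ℝ :=
  fun z => ∏ i : Fin n, if z i then (1/2 - α : ℝ) else (1/2 + α)

/-- Hamming weight. -/
def wt {m : ℕ} (z : Fin m → Bool) : ℕ := (Finset.univ.filter fun i => z i = true).card

/-- Binary entropy function (base 2). -/
def hbin (x : ℝ) : ℝ := -(x * Real.logb 2 x + (1 - x) * Real.logb 2 (1 - x))

/-- `IsDT k f`: `f` is computed by a decision tree of depth at most `k`. -/
inductive IsDT {n : ℕ} : ℕ → ((Fin n → Bool) → Bool) → Prop
  | const (k : ℕ) (b : Bool) : IsDT k (fun _ => b)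
  | node {k : ℕ} {g h : (Fin n → Bool) → Bool} (i : Fin n)
      (hg : IsDT k g) (hh : IsDT k h)
      (hgi : ∀ z b, g (Function.update z i b) = g z)
      (hhi : ∀ z b, h (Function.update z i b) = h z) :
      IsDT (k + 1) (fun z => if z i then h z else g z)

/-- The random-restriction distribution `R_p`: each coordinate is unset (`none`)
with probability `p`, else a uniform bit. -/
def Rp (n : ℕ) (p : ℝ) : (Fin n → Option Bool) → ℝ :=
  fun ρ => ∏ i : Fin n, Option.elim (ρ i) p (fun _ => (1 - p) / 2)

/-- Composition of a restriction with an input: unset coordinates are filled from `z`. -/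
def compR {n : ℕ} (ρ : Fin n → Option Bool) (z : Fin n → Bool) : Fin n → Bool :=
  fun i => (ρ i).getD (z i)

/-- The hamSlice of `{0,1}^m` of Hamming weight exactly `w`. -/
def hamSlice (m w : ℕ) : Finset (Fin m → Bool) :=
  Finset.univ.filter fun z => wt z = w

/-!
With `M` the dense model, `δ • M ≤ U` pointwise, so `U - δ • M` is a nonnegative measure of mass
`1 - δ`, i.e. `(1 - δ) • W` for a distribution `W`. Then `X := δ • Z + (1 - δ) • W = δ • Z + U - δ • M`
is a distribution in which `Z` is `δ`-dense, and `E_X f - E_U f = δ (E_Z f - E_M f)`, which is at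
most `ε` in absolute value.
-/

section Expectation

variable {n : ℕ} (f : (Fin n → Bool) → Bool)

theorem Ex_add (μ ν : (Fin n → Bool) → ℝ) : Ex (μ + ν) f = Ex μ f + Ex ν f := by
  simp only [Ex, Pi.add_apply, add_mul, sum_add_distrib]

theorem Ex_sub (μ ν : (Fin n → Bool) → ℝ) : Ex (μ - ν) f = Ex μ f - Ex ν f := by
  simp only [Ex, Pi.sub_apply, sub_mul, sum_sub_distrib]

theorem Ex_smul (c : ℝ) (μ : (Fin n → Bool) → ℝ) : Ex (c • μ) f = c * Ex μ f := by
  simp only [Ex, Pi.smul_apply, smul_eq_mul, mul_assoc, mul_sum]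

end Expectation

theorem isDist_uni (n : ℕ) : IsDist (uni n) :=
  ⟨fun _ => by unfold uni; positivity, by simp [uni, card_univ]⟩

section Distributions

variable {n : ℕ}

theorem IsDist.mix {μ ν : (Fin n → Bool) → ℝ} (hμ : IsDist μ) (hν : IsDist ν) {t : ℝ}
    (ht0 : 0 ≤ t) (ht1 : t ≤ 1) : IsDist (t • μ + (1 - t) • ν) := by
  refine ⟨fun z => ?_, ?_⟩
  · have := hμ.1 z
    have := hν.1 z
    simp only [Pi.add_apply, Pi.smul_apply, smul_eq_mul]
    nlinarith
  · simp only [Pi.add_apply, Pi.smul_apply, smul_eq_mul, sum_add_distrib, ← mul_sum, hμ.2, hν.2]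
    ring

theorem exists_isDist_eq_sum_smul {ν : (Fin n → Bool) → ℝ} (hν : ∀ z, 0 ≤ ν z) :
    ∃ μ, IsDist μ ∧ ν = (∑ z, ν z) • μ := by
  by_cases hmass : ∑ z, ν z = 0
  · refine ⟨uni n, isDist_uni n, ?_⟩
    rw [hmass, zero_smul]
    funext z
    exact (sum_eq_zero_iff_of_nonneg fun z _ => hν z).mp hmass z (mem_univ z)
  · refine ⟨(∑ z, ν z)⁻¹ • ν, ⟨fun z => ?_, ?_⟩, ?_⟩
    · exact smul_nonneg (inv_nonneg.mpr (sum_nonneg fun z _ => hν z)) (hν z)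
    · simp only [Pi.smul_apply, smul_eq_mul, ← mul_sum, inv_mul_cancel₀ hmass]
    · rw [smul_smul, mul_inv_cancel₀ hmass, one_smul]

theorem smul_le_uni_of_dense {δ : ℝ} (hδ0 : 0 < δ) {μ : (Fin n → Bool) → ℝ}
    (hdense : ∀ z, μ z ≤ (1 / δ) * (1 / 2 ^ n)) (z : Fin n → Bool) : (δ • μ) z ≤ uni n z := by
  calc (δ • μ) z ≤ δ * ((1 / δ) * (1 / 2 ^ n)) := mul_le_mul_of_nonneg_left (hdense z) hδ0.le
    _ = uni n z := by rw [← mul_assoc, mul_one_div_cancel hδ0.ne', one_mul, uni]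

end Distributions

theorem dense_model_implies_dense_in_pseudorandom_general {n : ℕ}
    (F : Set ((Fin n → Bool) → Bool))
    (μZ : (Fin n → Bool) → ℝ) (hZ : IsDist μZ)
    (ε δ : ℝ) (hδ0 : 0 < δ) (hδ1 : δ ≤ 1)
    (hmodel : ∃ μM : (Fin n → Bool) → ℝ, IsDist μM ∧
      (∀ z, μM z ≤ (1 / δ) * (1 / 2 ^ n)) ∧
      ∀ f ∈ F, |Ex μZ f - Ex μM f| ≤ ε) :
    ∃ μX μW : (Fin n → Bool) → ℝ, IsDist μX ∧ IsDist μW ∧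
      (∀ f ∈ F, |Ex μX f - Ex (uni n) f| ≤ ε) ∧
      (∀ z, μX z = δ * μZ z + (1 - δ) * μW z) := by
  obtain ⟨μM, hM, hMdense, hMmodel⟩ := hmodel
  obtain ⟨μW, hW, hslack⟩ :=
    exists_isDist_eq_sum_smul (ν := uni n - δ • μM) fun z =>
      sub_nonneg.mpr (smul_le_uni_of_dense hδ0 hMdense z)
  have hmass : ∑ z, (uni n - δ • μM) z = 1 - δ := by
    simp only [Pi.sub_apply, Pi.smul_apply, smul_eq_mul, sum_sub_distrib, ← mul_sum,
      (isDist_uni n).2, hM.2, mul_one]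
  rw [hmass] at hslack
  refine ⟨δ • μZ + (1 - δ) • μW, μW, hZ.mix hW hδ0.le hδ1, hW, fun f hf => ?_, fun z => rfl⟩
  have hgap : Ex (δ • μZ + (1 - δ) • μW) f - Ex (uni n) f = δ * (Ex μZ f - Ex μM f) := by
    rw [← hslack, Ex_add, Ex_smul, Ex_sub, Ex_smul]
    ring
  calc |Ex (δ • μZ + (1 - δ) • μW) f - Ex (uni n) f|
      = δ * |Ex μZ f - Ex μM f| := by rw [hgap, abs_mul, abs_of_pos hδ0]
    _ ≤ |Ex μZ f - Ex μM f| := mul_le_of_le_one_left (abs_nonneg _) hδ1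
    _ ≤ ε := hMmodel f hf

/-- a `δ`-dense `ε`-model implies density in an `ε`-pseudorandom set. -/
theorem dense_model_implies_dense_in_pseudorandom {n : ℕ}
    (F : Set ((Fin n → Bool) → Bool))
    (μZ : (Fin n → Bool) → ℝ) (hZ : IsDist μZ)
    (ε δ : ℝ) (hδ0 : 0 < δ) (hδ1 : δ ≤ 1) (hε : 0 ≤ ε)
    (hmodel : ∃ μM : (Fin n → Bool) → ℝ, IsDist μM ∧
      (∀ z, μM z ≤ (1 / δ) * (1 / 2 ^ n)) ∧
      ∀ f ∈ F, |Ex μZ f - Ex μM f| ≤ ε) :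
    ∃ μX μW : (Fin n → Bool) → ℝ, IsDist μX ∧ IsDist μW ∧
      (∀ f ∈ F, |Ex μX f - Ex (uni n) f| ≤ ε) ∧
      (∀ z, μX z = δ * μZ z + (1 - δ) * μW z) :=
  dense_model_implies_dense_in_pseudorandom_general F μZ hZ ε δ hδ0 hδ1 hmodel
end
end

section
/- If Z is a random variable over {0,1}^n that is δ-dense in the uniform distribution, then the average over coordinates i ∈ [n] of the bias |Pr[Z_i = 1] - 1/2| is at most √(log₂(1/δ)/n). -/
open Finset

noncomputable section

lemma mgf_bound {n : ℕ} (a : Fin n → ℝ) :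
    ∑ z : Fin n → Bool, (1 / 2 ^ n : ℝ) * Real.exp (∑ i, a i * (bval (z i) - 1/2))
      ≤ Real.exp (∑ i, (a i)^2 / 8) := by
  have key : ∑ z : Fin n → Bool, (1 / 2 ^ n : ℝ) * Real.exp (∑ i, a i * (bval (z i) - 1/2))
      = ∏ i : Fin n, Real.cosh (a i / 2) := by
    have h1 : ∀ z : Fin n → Bool, (1 / 2 ^ n : ℝ) * Real.exp (∑ i, a i * (bval (z i) - 1/2))
        = ∏ i : Fin n, ((1/2 : ℝ) * Real.exp (a i * (bval (z i) - 1/2))) := by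
      intro z
      rw [Finset.prod_mul_distrib, Real.exp_sum]
      simp [one_div, ← inv_pow]
    simp_rw [h1]
    have h2 := Finset.prod_univ_sum (fun _ : Fin n => (univ : Finset Bool))
      (fun i b => (1/2 : ℝ) * Real.exp (a i * (bval b - 1/2)))
    rw [Fintype.piFinset_univ] at h2
    rw [← h2]
    apply Finset.prod_congr rfl
    intro i _
    rw [Fintype.sum_bool, Real.cosh_eq]
    simp only [bval, if_true, if_false]
    norm_num
    ring_nf
  rw [key, Real.exp_sum]
  apply Finset.prod_le_prod
  · intro i _; positivity
  · intro i _
    calc Real.cosh (a i / 2) ≤ Real.exp ((a i / 2)^2 / 2) := Real.cosh_le_exp_half_sq _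
    _ = Real.exp ((a i)^2 / 8) := by ring_nf

/-- a `δ`-dense distribution has average coordinate bias at most
`√(log₂(1/δ)/n)`. -/
theorem avg_bias_of_dense {n : ℕ} (hn : 0 < n)
    (μZ : (Fin n → Bool) → ℝ) (hZ : IsDist μZ)
    (δ : ℝ) (hδ0 : 0 < δ) (hδ1 : δ ≤ 1)
    (hdense : ∀ z, μZ z ≤ (1 / δ) * (1 / 2 ^ n)) :
    (∑ i : Fin n, |Ex μZ (fun z => z i) - 1 / 2|) / n ≤
      Real.sqrt (Real.logb 2 (1 / δ) / n) := by
  obtain ⟨hpos, hsum⟩ := hZ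
  set q : Fin n → ℝ := fun i => Ex μZ (fun z => z i) with hq
  set S : ℝ := ∑ i : Fin n, |q i - 1/2| with hS
  have hS0 : 0 ≤ S := Finset.sum_nonneg fun i _ => abs_nonneg _
  set L : ℝ := Real.log (1/δ) with hL
  have hL0 : 0 ≤ L := Real.log_nonneg (by rw [le_div_iff₀ hδ0]; linarith)
  set ε : Fin n → ℝ := fun i => if 1/2 ≤ q i then 1 else -1 with hε
  have hεsq : ∀ i, (ε i)^2 = 1 := by intro i; simp only [hε]; split <;> norm_num
  have hεq : ∀ i, ε i * (q i - 1/2) = |q i - 1/2| := by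
    intro i; simp only [hε]; split
    · rw [abs_of_nonneg (by linarith)]; ring
    · rw [abs_of_neg (by linarith)]; ring
  have hnR : (0:ℝ) < n := Nat.cast_pos.mpr hn
  have main : ∀ l : ℝ, l * S ≤ L + n * l^2 / 8 := by
    intro l
    set X : (Fin n → Bool) → ℝ := fun z => ∑ i, (l * ε i) * (bval (z i) - 1/2) with hX
    have hEX : ∑ z : Fin n → Bool, μZ z * X z = l * S := by
      simp only [hX]
      simp_rw [Finset.mul_sum]
      rw [Finset.sum_comm]
      have h3 : ∀ i : Fin n, ∑ z : Fin n → Bool, μZ z * ((l * ε i) * (bval (z i) - 1/2))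
          = l * (ε i * (q i - 1/2)) := by
        intro i
        have h4 : ∀ z : Fin n → Bool, μZ z * ((l * ε i) * (bval (z i) - 1/2))
            = (l * ε i) * (μZ z * bval (z i)) - (l * ε i) * (1/2) * μZ z := by
          intro z; ring
        simp_rw [h4, Finset.sum_sub_distrib, ← Finset.mul_sum]
        rw [hsum]
        simp only [hq, Ex]
        ring
      simp_rw [h3, hεq]
      rw [← Finset.mul_sum]
    have jensen : Real.exp (l * S) ≤ ∑ z : Fin n → Bool, μZ z * Real.exp (X z) := by
      rw [← hEX]
      have := ConvexOn.map_sum_le (t := (univ : Finset (Fin n → Bool)))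
        (w := μZ) (p := X) convexOn_exp
        (fun z _ => hpos z) hsum (fun z _ => trivial)
      simpa [smul_eq_mul] using this
    have comp : ∑ z : Fin n → Bool, μZ z * Real.exp (X z)
        ≤ (1/δ) * ∑ z : Fin n → Bool, (1 / 2 ^ n : ℝ) * Real.exp (X z) := by
      rw [Finset.mul_sum]
      apply Finset.sum_le_sum
      intro z _
      rw [← mul_assoc]
      exact mul_le_mul_of_nonneg_right (hdense z) (Real.exp_nonneg _)
    have mgf := mgf_bound (fun i => l * ε i)
    have hsq : ∑ i : Fin n, (l * ε i)^2 / 8 = n * l^2 / 8 := by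
      have h5 : ∀ i : Fin n, (l * ε i)^2 / 8 = l^2/8 := fun i => by
        rw [mul_pow, hεsq]; ring
      simp_rw [h5]
      rw [Finset.sum_const, card_univ, Fintype.card_fin, nsmul_eq_mul]
      ring
    rw [hsq] at mgf
    have hfin : Real.exp (l * S) ≤ Real.exp (L + n * l^2 / 8) := by
      calc Real.exp (l * S) ≤ _ := jensen
      _ ≤ (1/δ) * ∑ z : Fin n → Bool, (1 / 2 ^ n : ℝ) * Real.exp (X z) := comp
      _ ≤ (1/δ) * Real.exp (n * l^2 / 8) :=
          mul_le_mul_of_nonneg_left mgf (by positivity)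
      _ = Real.exp (L + n * l^2 / 8) := by
          rw [Real.exp_add, hL, Real.exp_log (by positivity)]
    exact Real.exp_le_exp.mp hfin
  have hSbound : S / n ≤ Real.sqrt (L / (2 * n)) := by
    rcases eq_or_lt_of_le hL0 with h0 | hLpos
    · have hSle : S ≤ 0 := by
        by_contra h
        push_neg at h
        have hl0 : (0:ℝ) < 4 * S / n := by positivity
        have hb := main (4 * S / n)
        rw [← h0] at hb
        have hn' : (n:ℝ) ≠ 0 := hnR.ne'
        have e1 : (n:ℝ) * (4 * S / n)^2 / 8 = 2 * S^2 / n := by field_simp; ring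
        have e2 : (4 * S / n) * S = 4 * S^2 / n := by field_simp
        rw [e1, e2] at hb
        have e3 : 0 < S^2 / n := by positivity
        have e4 : 4 * S^2 / n = 4 * (S^2/n) := by ring
        have e5 : 2 * S^2 / n = 2 * (S^2/n) := by ring
        rw [e4, e5] at hb
        linarith
      calc S / n ≤ 0 := div_nonpos_of_nonpos_of_nonneg hSle hnR.le
      _ ≤ _ := Real.sqrt_nonneg _
    · set l : ℝ := Real.sqrt (8 * L / n) with hl
      have hlpos : 0 < l := Real.sqrt_pos.mpr (by positivity)
      have hlsq : l^2 = 8 * L / n := Real.sq_sqrt (by positivity)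
      have hb := main l
      have heq : n * l^2 / 8 = L := by rw [hlsq]; field_simp
      rw [heq] at hb
      have hSl : S ≤ 2 * L / l := by rw [le_div_iff₀ hlpos]; linarith
      have hsq2 : (2 * L / l)^2 = n * L / 2 := by
        rw [div_pow, hlsq]
        rw [div_div_eq_mul_div, div_eq_div_iff (by positivity) (by norm_num)]
        ring
      have hS2 : S^2 ≤ n * L / 2 := by
        rw [← hsq2]
        exact pow_le_pow_left₀ hS0 hSl 2
      rw [Real.le_sqrt (by positivity) (by positivity)]
      rw [div_pow, div_le_div_iff₀ (by positivity) (by positivity)]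
      nlinarith [hS2]
  refine hSbound.trans (Real.sqrt_le_sqrt ?_)
  rw [Real.logb, div_div]
  have hlog2 : 0 < Real.log 2 := Real.log_pos (by norm_num)
  have h2n : Real.log 2 * n ≤ 2 * n := by nlinarith [Real.log_two_lt_d9]
  exact div_le_div_of_nonneg_left hL0 (by positivity) h2n
end
end

section
/- Let f: {0,1}^n → {0,1} satisfy δ·E[f(N_α)] - ε' ≥ E[f(U)], where N_α is the product distribution with bits equal to 1 with probability 1/2 - α, and set q = E[f(N_α)]. Then for any positive integer ℓ there is a random function F: {0,1}^m → {0,1}, given by F(z) = OR over i ∈ [ℓ] of f(z_{I_i}) where each I_i is a sequence of n independent uniform indices from [m], such that: (1) Pr[F(z) = 0] ≤ e^{-ℓq} when z is uniform on strings of Hamming weight exactly m/2 - αm; and (2) Pr[F(z) = 1] ≤ ℓqδ when z is uniform on strings of Hamming weight exactly m/2. -/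
open Finset

noncomputable section

/- ----------------- auxiliary lemmas ----------------- -/

lemma bval_nonneg (b : Bool) : 0 ≤ bval b := by cases b <;> simp [bval]

lemma bval_le_one (b : Bool) : bval b ≤ 1 := by cases b <;> simp [bval]

lemma aux_sum_sample {n m : ℕ} (z : Fin m → Bool) (F : (Fin n → Bool) → ℝ) :
    ∑ J : Fin n → Fin m, F (fun j => z (J j)) =
    ∑ y : Fin n → Bool, (∏ j, ((univ.filter fun a : Fin m => z a = y j).card : ℝ)) * F y := by
  rw [Finset.sum_comp F (fun J : Fin n → Fin m => fun j => z (J j))]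
  rw [Finset.sum_subset (Finset.subset_univ _)]
  · refine Finset.sum_congr rfl fun y _ => ?_
    have hfib : (univ.filter fun J : Fin n → Fin m => (fun j => z (J j)) = y) =
        Fintype.piFinset (fun j => univ.filter fun a : Fin m => z a = y j) := by
      ext J
      simp [Fintype.mem_piFinset, funext_iff]
    rw [hfib, Fintype.card_piFinset]
    rw [nsmul_eq_mul, Nat.cast_prod]
  · intro y _ hy
    have : (univ.filter fun J : Fin n → Fin m => (fun j => z (J j)) = y) = ∅ := by
      rw [Finset.filter_eq_empty_iff]
      intro J _ hJ
      exact hy (Finset.mem_image.2 ⟨J, Finset.mem_univ J, hJ⟩)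
    simp [this]

lemma aux_sample_ex {n m : ℕ} (z : Fin m → Bool) (p : ℝ)
    (hp : (wt z : ℝ) = p * m) (f : (Fin n → Bool) → Bool) :
    ∑ J : Fin n → Fin m, bval (f (fun j => z (J j))) =
    (m : ℝ) ^ n * ∑ y : Fin n → Bool, (∏ j, if y j then p else 1 - p) * bval (f y) := by
  have h0 : (∑ J : Fin n → Fin m, bval (f (fun j => z (J j)))) =
      ∑ y : Fin n → Bool, (∏ j, ((univ.filter fun a : Fin m => z a = y j).card : ℝ)) * bval (f y) :=
    aux_sum_sample z (fun v => bval (f v))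
  rw [h0, Finset.mul_sum]
  refine Finset.sum_congr rfl fun y _ => ?_
  have hsum := Finset.card_filter_add_card_filter_not
    (s := (univ : Finset (Fin m))) (p := fun a => z a = true)
  have hne : (univ.filter fun a : Fin m => ¬ z a = true) =
      (univ.filter fun a : Fin m => z a = false) := by
    ext a; simp
  rw [hne, Finset.card_univ, Fintype.card_fin] at hsum
  have htrue : ((univ.filter fun a : Fin m => z a = true).card : ℝ) = p * m := hp
  have hfalse : ((univ.filter fun a : Fin m => z a = false).card : ℝ) = (1 - p) * m := by
    have := congrArg (fun k : ℕ => (k : ℝ)) hsum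
    push_cast at this
    unfold wt at htrue
    linarith
  have key : ∀ b : Bool, ((univ.filter fun a : Fin m => z a = b).card : ℝ) =
      (m : ℝ) * (if b then p else 1 - p) := by
    intro b; cases b
    · simpa [mul_comm] using hfalse
    · simpa [mul_comm] using htrue
  rw [Finset.prod_congr rfl fun j _ => key (y j), Finset.prod_mul_distrib,
    Finset.prod_const, Finset.card_univ, Fintype.card_fin]
  ring

lemma aux_ex_coin {n : ℕ} (α : ℝ) (f : (Fin n → Bool) → Bool) :
    Ex (coin n α) f =
    ∑ y : Fin n → Bool, (∏ j, if y j then (1/2 - α) else 1 - (1/2 - α)) * bval (f y) := by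
  unfold Ex coin
  refine Finset.sum_congr rfl fun y _ => ?_
  congr 1
  refine Finset.prod_congr rfl fun j _ => ?_
  cases y j <;> simp <;> ring

lemma aux_ex_uni {n : ℕ} (f : (Fin n → Bool) → Bool) :
    Ex (uni n) f =
    ∑ y : Fin n → Bool, (∏ j, if y j then (1/2 : ℝ) else 1 - 1/2) * bval (f y) := by
  unfold Ex uni
  refine Finset.sum_congr rfl fun y _ => ?_
  congr 1
  have : ∀ j : Fin n, (if y j then (1/2 : ℝ) else 1 - 1/2) = 1/2 := by
    intro j; cases y j <;> norm_num
  rw [Finset.prod_congr rfl fun j _ => this j, Finset.prod_const, Finset.card_univ,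
    Fintype.card_fin]
  rw [div_pow, one_pow, one_div]

lemma aux_coin_sum {n : ℕ} (α : ℝ) : ∑ z : Fin n → Bool, coin n α z = 1 := by
  unfold coin
  rw [← Fintype.piFinset_univ,
    ← Finset.prod_univ_sum (fun _ : Fin n => (univ : Finset Bool))
      (fun _ b => if b then (1/2 - α : ℝ) else (1/2 + α))]
  have : ∀ i : Fin n, (∑ b : Bool, if b then (1/2 - α : ℝ) else (1/2 + α)) = 1 := by
    intro i; simp [Fintype.sum_bool]; ring
  rw [Finset.prod_congr rfl fun i _ => this i, Finset.prod_const_one]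

lemma aux_sum_eval {X : Type*} [Fintype X] [DecidableEq X] {ℓ : ℕ} (i : Fin ℓ) (h : X → ℝ) :
    ∑ I : Fin ℓ → X, h (I i) = (Fintype.card X : ℝ) ^ (ℓ - 1) * ∑ x : X, h x := by
  have step1 : ∀ I : Fin ℓ → X, h (I i) = ∏ i' : Fin ℓ, (if i' = i then h (I i') else 1) := by
    intro I
    rw [Finset.prod_ite_eq' univ i (fun i' => h (I i'))]
    simp
  rw [Finset.sum_congr rfl fun I _ => step1 I, ← Fintype.piFinset_univ,
    ← Finset.prod_univ_sum (fun _ : Fin ℓ => (univ : Finset X))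
      (fun i' x => if i' = i then h x else 1)]
  have step2 : ∀ i' : Fin ℓ, (∑ x : X, if i' = i then h x else 1) =
      if i' = i then ∑ x : X, h x else (Fintype.card X : ℝ) := by
    intro i'
    by_cases hii : i' = i <;> simp [hii]
  rw [Finset.prod_congr rfl fun i' _ => step2 i',
    ← Finset.mul_prod_erase univ _ (Finset.mem_univ i)]
  rw [if_pos rfl]
  have : ∀ i' ∈ (univ : Finset (Fin ℓ)).erase i,
      (if i' = i then ∑ x : X, h x else (Fintype.card X : ℝ)) = (Fintype.card X : ℝ) := by
    intro i' hi'
    rw [if_neg (Finset.ne_of_mem_erase hi')]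
  rw [Finset.prod_congr rfl this, Finset.prod_const, Finset.card_erase_of_mem (Finset.mem_univ i),
    Finset.card_univ, Fintype.card_fin]
  ring

/-- from a refuter `f` of pseudodensity of `N_α`, the random OR of `ℓ`
copies of `f` on randomly sampled coordinates distinguishes the slices of weight
`m/2 - αm` and `m/2`. Here `m = 2s` and `t = αm`. -/
theorem promise_majority_distinguisher {n m ℓ s t : ℕ}
    (hn : 0 < n) (hℓ : 0 < ℓ) (hm : 2 * s = m) (hts : t ≤ s)
    (α ε' δ : ℝ) (hα0 : 0 ≤ α) (hα2 : α ≤ 1 / 2)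
    (hα : (t : ℝ) = α * m) (hε' : 0 ≤ ε')
    (f : (Fin n → Bool) → Bool)
    (hf : δ * Ex (coin n α) f - ε' ≥ Ex (uni n) f) :
    ((∑ I : Fin ℓ → Fin n → Fin m, ∑ z ∈ hamSlice m (s - t),
        (if ∀ i, f (fun j => z (I i j)) = false then (1 : ℝ) else 0)) /
      ((Fintype.card (Fin ℓ → Fin n → Fin m) : ℝ) * ((hamSlice m (s - t)).card : ℝ)) ≤
        Real.exp (-(ℓ * Ex (coin n α) f))) ∧
    ((∑ I : Fin ℓ → Fin n → Fin m, ∑ z ∈ hamSlice m s,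
        (if ∃ i, f (fun j => z (I i j)) = true then (1 : ℝ) else 0)) /
      ((Fintype.card (Fin ℓ → Fin n → Fin m) : ℝ) * ((hamSlice m s).card : ℝ)) ≤
        (ℓ : ℝ) * Ex (coin n α) f * δ) := by
  set q : ℝ := Ex (coin n α) f with hq
  set u : ℝ := Ex (uni n) f with hu
  have hu0 : 0 ≤ u := by
    rw [hu]; unfold Ex uni
    exact Finset.sum_nonneg fun y _ => mul_nonneg (by positivity) (bval_nonneg _)
  have hq0 : 0 ≤ q := by
    refine Finset.sum_nonneg fun y _ => mul_nonneg ?_ (bval_nonneg _)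
    unfold coin
    exact Finset.prod_nonneg fun i _ => by split <;> linarith
  have hq1 : q ≤ 1 := by
    have h : q ≤ ∑ z : Fin n → Bool, coin n α z := by
      refine Finset.sum_le_sum fun y _ => ?_
      have h1 : 0 ≤ coin n α y := by
        unfold coin; exact Finset.prod_nonneg fun i _ => by split <;> linarith
      calc coin n α y * bval (f y) ≤ coin n α y * 1 :=
            mul_le_mul_of_nonneg_left (bval_le_one _) h1
        _ = coin n α y := mul_one _
    rw [aux_coin_sum] at h
    exact h
  have hδq : 0 ≤ δ * q := by linarith
  have hℓqδ : (0:ℝ) ≤ (ℓ : ℝ) * q * δ := by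
    have h1 : (0:ℝ) ≤ (ℓ : ℝ) * (δ * q) := mul_nonneg (Nat.cast_nonneg ℓ) hδq
    linarith [h1]
  by_cases hm0 : m = 0
  · subst hm0
    have hE : IsEmpty (Fin ℓ → Fin n → Fin 0) := ⟨fun I => Fin.elim0 (I ⟨0, hℓ⟩ ⟨0, hn⟩)⟩
    constructor
    · rw [@Finset.univ_eq_empty _ _ hE]
      simpa using (Real.exp_pos _).le
    · rw [@Finset.univ_eq_empty _ _ hE]
      simpa using hℓqδ
  have hmp : 0 < m := Nat.pos_of_ne_zero hm0
  have hMp : (0:ℝ) < (m:ℝ) ^ n := by positivity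
  have hs : (s : ℝ) = (m : ℝ) / 2 := by
    have h : ((2 * s : ℕ) : ℝ) = (m : ℝ) := by exact_mod_cast congrArg (Nat.cast : ℕ → ℝ) hm
    push_cast at h; linarith
  have hcardfun : ((Fintype.card (Fin ℓ → Fin n → Fin m)) : ℝ) = ((m:ℝ) ^ n) ^ ℓ := by
    simp [Fintype.card_fun]
  have hcardX : ((Fintype.card (Fin n → Fin m)) : ℝ) = (m:ℝ) ^ n := by
    simp [Fintype.card_fun]
  -- key sampling identities
  have hkey1 : ∀ z ∈ hamSlice m (s - t),
      ∑ J : Fin n → Fin m, bval (f (fun j => z (J j))) = (m:ℝ) ^ n * q := by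
    intro z hz
    have hwz : wt z = s - t := (Finset.mem_filter.1 hz).2
    have hp : (wt z : ℝ) = (1/2 - α) * m := by
      rw [hwz, Nat.cast_sub hts, hα]; linarith
    rw [aux_sample_ex z (1/2 - α) hp f, hq, aux_ex_coin]
  have hkey2 : ∀ z ∈ hamSlice m s,
      ∑ J : Fin n → Fin m, bval (f (fun j => z (J j))) = (m:ℝ) ^ n * u := by
    intro z hz
    have hwz : wt z = s := (Finset.mem_filter.1 hz).2
    have hp : (wt z : ℝ) = (1/2 : ℝ) * m := by rw [hwz]; linarith
    rw [aux_sample_ex z (1/2) hp f, hu, aux_ex_uni]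
  constructor
  · -- Part 1
    have hN1 : (∑ I : Fin ℓ → Fin n → Fin m, ∑ z ∈ hamSlice m (s - t),
        (if ∀ i, f (fun j => z (I i j)) = false then (1 : ℝ) else 0)) =
        ((hamSlice m (s - t)).card : ℝ) * ((m:ℝ) ^ n * (1 - q)) ^ ℓ := by
      rw [Finset.sum_comm]
      have inner : ∀ z ∈ hamSlice m (s - t),
          (∑ I : Fin ℓ → Fin n → Fin m,
            (if ∀ i, f (fun j => z (I i j)) = false then (1 : ℝ) else 0)) =
          ((m:ℝ) ^ n * (1 - q)) ^ ℓ := by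
        intro z hz
        have hterm : ∀ I : Fin ℓ → Fin n → Fin m,
            (if ∀ i, f (fun j => z (I i j)) = false then (1 : ℝ) else 0) =
            ∏ i : Fin ℓ, (if f (fun j => z (I i j)) = false then (1:ℝ) else 0) := by
          intro I; rw [Finset.prod_boole]; simp
        rw [Finset.sum_congr rfl fun I _ => hterm I, ← Fintype.piFinset_univ,
          ← Finset.prod_univ_sum (fun _ : Fin ℓ => (univ : Finset (Fin n → Fin m)))
            (fun _ J => if f (fun j => z (J j)) = false then (1:ℝ) else 0)]
        have hJ : (∑ J : Fin n → Fin m, (if f (fun j => z (J j)) = false then (1:ℝ) else 0)) =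
            (m:ℝ) ^ n * (1 - q) := by
          have hone : ∀ J : Fin n → Fin m,
              (if f (fun j => z (J j)) = false then (1:ℝ) else 0) =
              1 - bval (f (fun j => z (J j))) := by
            intro J; cases hfc : f (fun j => z (J j)) <;> simp [bval, hfc]
          rw [Finset.sum_congr rfl fun J _ => hone J, Finset.sum_sub_distrib, hkey1 z hz,
            Finset.sum_const, Finset.card_univ, nsmul_eq_mul, mul_one, hcardX]
          ring
        rw [Finset.prod_congr rfl fun _ _ => hJ, Finset.prod_const, Finset.card_univ,
          Fintype.card_fin]
      rw [Finset.sum_congr rfl inner, Finset.sum_const, nsmul_eq_mul]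
    rw [hN1, hcardfun]
    by_cases hc1 : ((hamSlice m (s - t)).card : ℝ) = 0
    · rw [hc1]
      simpa using (Real.exp_pos _).le
    · have hc1p : (0:ℝ) < ((hamSlice m (s - t)).card : ℝ) :=
        lt_of_le_of_ne (Nat.cast_nonneg _) (Ne.symm hc1)
      have heq : ((hamSlice m (s - t)).card : ℝ) * ((m:ℝ) ^ n * (1 - q)) ^ ℓ /
          (((m:ℝ) ^ n) ^ ℓ * ((hamSlice m (s - t)).card : ℝ)) = (1 - q) ^ ℓ := by
        rw [mul_pow]
        field_simp
      rw [heq]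
      calc (1 - q) ^ ℓ ≤ (Real.exp (-q)) ^ ℓ := by
            refine pow_le_pow_left₀ (by linarith) ?_ ℓ
            linarith [Real.add_one_le_exp (-q)]
        _ = Real.exp (-((ℓ:ℝ) * q)) := by
            rw [← Real.exp_nat_mul]; congr 1; ring
  · -- Part 2
    by_cases hc2 : (hamSlice m s).card = 0
    · rw [Finset.card_eq_zero.1 hc2]
      simpa using hℓqδ
    · have hc2p : (0:ℝ) < ((hamSlice m s).card : ℝ) := by
        exact_mod_cast Nat.pos_of_ne_zero hc2
      have hD : (0:ℝ) < (Fintype.card (Fin ℓ → Fin n → Fin m) : ℝ) *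
          ((hamSlice m s).card : ℝ) := by
        rw [hcardfun]; positivity
      rw [div_le_iff₀ hD]
      have hb : (∑ I : Fin ℓ → Fin n → Fin m, ∑ z ∈ hamSlice m s,
          (if ∃ i, f (fun j => z (I i j)) = true then (1 : ℝ) else 0)) ≤
          ((hamSlice m s).card : ℝ) * ((ℓ:ℝ) * ((m:ℝ)^n)^ℓ * u) := by
        rw [Finset.sum_comm]
        have inner : ∀ z ∈ hamSlice m s,
            (∑ I : Fin ℓ → Fin n → Fin m,
              (if ∃ i, f (fun j => z (I i j)) = true then (1 : ℝ) else 0)) ≤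
            (ℓ:ℝ) * ((m:ℝ)^n)^ℓ * u := by
          intro z hz
          calc (∑ I : Fin ℓ → Fin n → Fin m,
              (if ∃ i, f (fun j => z (I i j)) = true then (1 : ℝ) else 0)) ≤
              ∑ I : Fin ℓ → Fin n → Fin m, ∑ i : Fin ℓ, bval (f (fun j => z (I i j))) := by
                refine Finset.sum_le_sum fun I _ => ?_
                by_cases hE : ∃ i, f (fun j => z (I i j)) = true
                · rw [if_pos hE]
                  obtain ⟨i₀, hi₀⟩ := hE
                  have h1 : bval (f (fun j => z (I i₀ j))) = 1 := by simp [bval, hi₀]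
                  rw [← h1]
                  exact Finset.single_le_sum (f := fun i => bval (f (fun j => z (I i j))))
                    (fun i _ => bval_nonneg _) (Finset.mem_univ i₀)
                · rw [if_neg hE]
                  exact Finset.sum_nonneg fun i _ => bval_nonneg _
            _ = ∑ i : Fin ℓ, ∑ I : Fin ℓ → Fin n → Fin m, bval (f (fun j => z (I i j))) :=
                Finset.sum_comm
            _ = (ℓ:ℝ) * ((m:ℝ)^n)^ℓ * u := by
                have hone : ∀ i : Fin ℓ,
                    (∑ I : Fin ℓ → Fin n → Fin m, bval (f (fun j => z (I i j)))) =
                    ((m:ℝ)^n)^(ℓ-1) * ((m:ℝ)^n * u) := by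
                  intro i
                  have h3 := aux_sum_eval i (fun J : Fin n → Fin m => bval (f (fun j => z (J j))))
                  rw [hkey2 z hz, hcardX] at h3
                  exact h3
                rw [Finset.sum_congr rfl fun i _ => hone i, Finset.sum_const, Finset.card_univ,
                  Fintype.card_fin, nsmul_eq_mul]
                have h4 : ((m:ℝ)^n)^(ℓ-1) * ((m:ℝ)^n) = ((m:ℝ)^n)^ℓ := by
                  rw [← pow_succ, Nat.sub_add_cancel hℓ]
                calc (ℓ:ℝ) * (((m:ℝ)^n)^(ℓ-1) * ((m:ℝ)^n * u)) =
                    (ℓ:ℝ) * ((((m:ℝ)^n)^(ℓ-1) * ((m:ℝ)^n)) * u) := by ring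
                  _ = _ := by rw [h4]; ring
        calc (∑ z ∈ hamSlice m s, ∑ I : Fin ℓ → Fin n → Fin m,
              (if ∃ i, f (fun j => z (I i j)) = true then (1 : ℝ) else 0)) ≤
            ∑ _z ∈ hamSlice m s, (ℓ:ℝ) * ((m:ℝ)^n)^ℓ * u := Finset.sum_le_sum inner
          _ = ((hamSlice m s).card : ℝ) * ((ℓ:ℝ) * ((m:ℝ)^n)^ℓ * u) := by
              rw [Finset.sum_const, nsmul_eq_mul]
      refine le_trans hb ?_
      rw [hcardfun]
      have hub : u ≤ δ * q := by linarith
      have hnn : (0:ℝ) ≤ ((hamSlice m s).card : ℝ) * ((ℓ:ℝ) * ((m:ℝ)^n)^ℓ) := by positivity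
      have hmul := mul_le_mul_of_nonneg_left hub hnn
      nlinarith [hmul]
end
end

section
/- Let f: {0,1}^n → {0,1} be a depth-k decision tree, and let S be the distribution on {0,1}^n obtained by: partitioning [n] into K buckets uniformly at random (each index independently assigned a uniform bucket in [K]), then assigning each bucket an independent uniform bit, and setting each coordinate to its bucket's bit. Then |E[f(S)] - E[f(U)]| ≤ k²/K, where U is uniform on {0,1}^n. -/
open Finset

noncomputable section

lemma sum_split_aux {ι α : Type*} [Fintype ι] [Fintype α] [DecidableEq ι] (i : ι)
    (F : (ι → α) → ℝ) :
    ∑ j : α, ∑ a : ι → α, F (Function.update a i j)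
      = (Fintype.card α : ℝ) * ∑ a, F a := by
  have hσ : Function.Bijective
      (fun p : α × (ι → α) => (p.2 i, Function.update p.2 i p.1)) := by
    apply Function.Involutive.bijective
    intro p
    simp [Function.update_idem]
  calc ∑ j : α, ∑ a : ι → α, F (Function.update a i j)
      = ∑ p : α × (ι → α), F (Function.update p.2 i p.1) := by
        rw [Fintype.sum_prod_type]
    _ = ∑ p : α × (ι → α), F p.2 :=
        Fintype.sum_bijective _ hσ _ _ (fun p => rfl)
    _ = (Fintype.card α : ℝ) * ∑ a, F a := by
        rw [Fintype.sum_prod_type]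
        simp only [Prod.snd, Finset.sum_const, Finset.card_univ, nsmul_eq_mul]

variable {n K : ℕ}

/-- merged input -/
def inp (T : Finset (Fin n)) (S : Finset (Fin K)) (a₀ a : Fin n → Fin K)
    (β b : Fin K → Bool) : Fin n → Bool :=
  fun i =>
    (fun j => if j ∈ S then β j else b j) (if i ∈ T then a₀ i else a i)

def CE (K : ℕ) {n : ℕ} (f : (Fin n → Bool) → Bool) (T : Finset (Fin n))
    (S : Finset (Fin K)) (a₀ : Fin n → Fin K) (β : Fin K → Bool) : ℝ :=
  ∑ a : Fin n → Fin K, ∑ b : Fin K → Bool,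
    (1 / (K : ℝ) ^ n) * (1 / 2 ^ K) * bval (f (inp T S a₀ a β b))

def UE {n : ℕ} (f : (Fin n → Bool) → Bool) (T : Finset (Fin n))
    (v : Fin n → Bool) : ℝ :=
  ∑ z : Fin n → Bool, (1 / (2:ℝ) ^ n) * bval (f (fun i => if i ∈ T then v i else z i))

lemma massK (hK : 0 < K) :
    (∑ _a : Fin n → Fin K, ∑ _b : Fin K → Bool, (1 / (K : ℝ) ^ n) * (1 / 2 ^ K)) = 1 := by
  have hKn : ((K : ℝ)) ≠ 0 := by positivity
  simp only [Finset.sum_const, Finset.card_univ, nsmul_eq_mul, Fintype.card_fun,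
    Fintype.card_fin, Fintype.card_bool]
  push_cast
  field_simp

lemma CEtype_nonneg (G : (Fin n → Fin K) → (Fin K → Bool) → Bool) :
    0 ≤ ∑ a : Fin n → Fin K, ∑ b : Fin K → Bool,
        (1 / (K : ℝ) ^ n) * (1 / 2 ^ K) * bval (G a b) := by
  apply Finset.sum_nonneg; intro a _
  apply Finset.sum_nonneg; intro b _
  have := bval_nonneg (G a b)
  positivity

lemma CEtype_le_one (hK : 0 < K) (G : (Fin n → Fin K) → (Fin K → Bool) → Bool) :
    (∑ a : Fin n → Fin K, ∑ b : Fin K → Bool,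
        (1 / (K : ℝ) ^ n) * (1 / 2 ^ K) * bval (G a b)) ≤ 1 := by
  calc (∑ a : Fin n → Fin K, ∑ b : Fin K → Bool,
        (1 / (K : ℝ) ^ n) * (1 / 2 ^ K) * bval (G a b))
      ≤ ∑ _a : Fin n → Fin K, ∑ _b : Fin K → Bool, (1 / (K : ℝ) ^ n) * (1 / 2 ^ K) := by
        apply Finset.sum_le_sum; intro a _
        apply Finset.sum_le_sum; intro b _
        have h1 := bval_le_one (G a b)
        have h2 : (0:ℝ) ≤ (1 / (K : ℝ) ^ n) * (1 / 2 ^ K) := by positivity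
        nlinarith [bval_nonneg (G a b)]
    _ = 1 := massK hK

lemma massU : (∑ _z : Fin n → Bool, (1 / (2:ℝ) ^ n)) = 1 := by
  simp only [Finset.sum_const, Finset.card_univ, nsmul_eq_mul, Fintype.card_fun,
    Fintype.card_fin, Fintype.card_bool]
  push_cast
  field_simp

lemma UE_nonneg (f : (Fin n → Bool) → Bool) (T : Finset (Fin n)) (v : Fin n → Bool) :
    0 ≤ UE f T v := by
  apply Finset.sum_nonneg; intro z _
  have := bval_nonneg (f (fun i => if i ∈ T then v i else z i))
  positivity

lemma UE_le_one (f : (Fin n → Bool) → Bool) (T : Finset (Fin n)) (v : Fin n → Bool) :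
    UE f T v ≤ 1 := by
  calc UE f T v ≤ ∑ _z : Fin n → Bool, (1 / (2:ℝ) ^ n) := by
        apply Finset.sum_le_sum; intro z _
        have h1 := bval_le_one (f (fun i => if i ∈ T then v i else z i))
        have h2 : (0:ℝ) ≤ (1 / (2:ℝ) ^ n) := by positivity
        nlinarith [bval_nonneg (f (fun i => if i ∈ T then v i else z i))]
    _ = 1 := massU

lemma abs_diff_le_one {x y : ℝ} (hx0 : 0 ≤ x) (hx1 : x ≤ 1) (hy0 : 0 ≤ y) (hy1 : y ≤ 1) :
    |x - y| ≤ 1 := by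
  rw [abs_sub_le_iff]; constructor <;> linarith

lemma inp_step {T : Finset (Fin n)} {S : Finset (Fin K)} {a₀ : Fin n → Fin K}
    {β : Fin K → Bool} {i : Fin n} {j : Fin K}
    (hi : i ∉ T) (hj : j ∉ S) (hTS : ∀ i' ∈ T, a₀ i' ∈ S)
    (a : Fin n → Fin K) (b : Fin K → Bool) (x : Bool) :
    inp T S a₀ (Function.update a i j) β (Function.update b j x)
      = inp (insert i T) (insert j S) (Function.update a₀ i j) a
          (Function.update β j x) b := by
  funext i'
  simp only [inp, Function.update_apply, Finset.mem_insert]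
  by_cases hii : i' = i
  · subst hii
    simp [hi, hj]
  · by_cases hT : i' ∈ T
    · have hS : a₀ i' ∈ S := hTS i' hT
      have hne : a₀ i' ≠ j := fun h => hj (h ▸ hS)
      simp [hT, hS, hii, hne]
    · simp only [if_neg hii, if_neg hT, if_neg (by simp [hii, hT] : ¬(i' = i ∨ i' ∈ T))]
      by_cases hS : a i' ∈ S
      · have hne : a i' ≠ j := fun h => hj (h ▸ hS)
        simp [hS, hne]
      · by_cases haj : a i' = j
        · simp [haj, hj]
        · simp [hS, haj]

lemma uinp_step {T : Finset (Fin n)} {S : Finset (Fin K)} {a₀ : Fin n → Fin K}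
    {β : Fin K → Bool} {i : Fin n} {j : Fin K}
    (hi : i ∉ T) (hj : j ∉ S) (hTS : ∀ i' ∈ T, a₀ i' ∈ S)
    (z : Fin n → Bool) (x : Bool) :
    (fun i' => if i' ∈ T then β (a₀ i') else Function.update z i x i')
      = (fun i' => if i' ∈ insert i T
          then (Function.update β j x) ((Function.update a₀ i j) i') else z i') := by
  funext i'
  simp only [Function.update_apply, Finset.mem_insert]
  by_cases hii : i' = i
  · subst hii
    simp [hi]
  · by_cases hT : i' ∈ T
    · have hS : a₀ i' ∈ S := hTS i' hT
      have hne : a₀ i' ≠ j := fun h => hj (h ▸ hS)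
      simp [hT, hii, hne]
    · simp [hT, hii]

lemma inp_mem {T : Finset (Fin n)} {S : Finset (Fin K)} {a₀ : Fin n → Fin K}
    {β : Fin K → Bool} {i : Fin n} (hiT : i ∈ T) (hS : a₀ i ∈ S)
    (a : Fin n → Fin K) (b : Fin K → Bool) :
    inp T S a₀ a β b i = β (a₀ i) := by
  simp [inp, hiT, hS]

lemma bound_nonneg {k : ℕ} (c : ℝ) (hc : 0 ≤ c) (K : ℕ) :
    0 ≤ (∑ m ∈ Finset.range k, (c + (m : ℝ))) / K := by
  apply div_nonneg _ (by positivity)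
  apply Finset.sum_nonneg
  intro m _
  positivity


lemma inp_insert_val {T : Finset (Fin n)} {S : Finset (Fin K)} {a₀ : Fin n → Fin K}
    {β : Fin K → Bool} {i : Fin n} {j : Fin K} (x : Bool)
    (a : Fin n → Fin K) (b : Fin K → Bool) :
    inp (insert i T) (insert j S) (Function.update a₀ i j) a (Function.update β j x) b i
      = x := by
  show (fun jj => if jj ∈ insert j S then Function.update β j x jj else b jj)
      (if i ∈ insert i T then Function.update a₀ i j i else a i) = x
  rw [if_pos (Finset.mem_insert_self i T), Function.update_self]
  simp

lemma CE_split (f : (Fin n → Bool) → Bool) (T : Finset (Fin n)) (S : Finset (Fin K))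
    (a₀ : Fin n → Fin K) (β : Fin K → Bool) (i : Fin n) (hK : 0 < K) :
    CE K f T S a₀ β = (1 / (K:ℝ)) * ∑ j : Fin K, ∑ a : Fin n → Fin K, ∑ b : Fin K → Bool,
      (1 / (K : ℝ) ^ n) * (1 / 2 ^ K) * bval (f (inp T S a₀ (Function.update a i j) β b)) := by
  have hKne : ((K:ℝ)) ≠ 0 := by positivity
  have hsum := sum_split_aux (i := i) (F := fun a => ∑ b : Fin K → Bool,
    (1 / (K : ℝ) ^ n) * (1 / 2 ^ K) * bval (f (inp T S a₀ a β b)))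
  simp only [Fintype.card_fin] at hsum
  unfold CE
  rw [hsum]
  field_simp

lemma CEj_eq {T : Finset (Fin n)} {S : Finset (Fin K)} {a₀ : Fin n → Fin K}
    {β : Fin K → Bool} {i : Fin n} {j : Fin K} (g h : (Fin n → Bool) → Bool)
    (hiT : i ∉ T) (hjS : j ∉ S) (hTS : ∀ i' ∈ T, a₀ i' ∈ S) :
    (∑ a : Fin n → Fin K, ∑ b : Fin K → Bool,
        (1 / (K : ℝ) ^ n) * (1 / 2 ^ K) *
          bval ((fun z => if z i then h z else g z) (inp T S a₀ (Function.update a i j) β b)))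
      = (1/2) * ∑ x : Bool, CE K (if x then h else g) (insert i T) (insert j S)
          (Function.update a₀ i j) (Function.update β j x) := by
  calc (∑ a : Fin n → Fin K, ∑ b : Fin K → Bool,
        (1 / (K : ℝ) ^ n) * (1 / 2 ^ K) *
          bval ((fun z => if z i then h z else g z) (inp T S a₀ (Function.update a i j) β b)))
      = ∑ a : Fin n → Fin K, (1/2) * ∑ x : Bool, ∑ b : Fin K → Bool,
          (1 / (K : ℝ) ^ n) * (1 / 2 ^ K) *
          bval ((fun z => if z i then h z else g z)
            (inp T S a₀ (Function.update a i j) β (Function.update b j x))) := by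
        refine Finset.sum_congr rfl fun a _ => ?_
        have hb := sum_split_aux (i := j) (F := fun b : Fin K → Bool =>
          (1 / (K : ℝ) ^ n) * (1 / 2 ^ K) *
          bval ((fun z => if z i then h z else g z) (inp T S a₀ (Function.update a i j) β b)))
        simp only [Fintype.card_bool] at hb
        rw [hb]
        ring
    _ = (1/2) * ∑ x : Bool, ∑ a : Fin n → Fin K, ∑ b : Fin K → Bool,
          (1 / (K : ℝ) ^ n) * (1 / 2 ^ K) *
          bval ((fun z => if z i then h z else g z)
            (inp T S a₀ (Function.update a i j) β (Function.update b j x))) := by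
        rw [← Finset.mul_sum, Finset.sum_comm]
    _ = (1/2) * ∑ x : Bool, CE K (if x then h else g) (insert i T) (insert j S)
          (Function.update a₀ i j) (Function.update β j x) := by
        congr 1
        refine Finset.sum_congr rfl fun x _ => ?_
        unfold CE
        refine Finset.sum_congr rfl fun a _ => Finset.sum_congr rfl fun b _ => ?_
        rw [inp_step hiT hjS hTS a b x]
        have hz := inp_insert_val (T := T) (S := S) (a₀ := a₀) (β := β) (i := i) (j := j) x a b
        cases x <;> simp [hz] at hz ⊢ <;> simp [hz]

lemma UE_split {T : Finset (Fin n)} {S : Finset (Fin K)} {a₀ : Fin n → Fin K}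
    {β : Fin K → Bool} {i : Fin n} {j : Fin K} (g h : (Fin n → Bool) → Bool)
    (hiT : i ∉ T) (hjS : j ∉ S) (hTS : ∀ i' ∈ T, a₀ i' ∈ S) :
    UE (fun z => if z i then h z else g z) T (fun i' => β (a₀ i'))
      = (1/2) * ∑ x : Bool, UE (if x then h else g) (insert i T)
          (fun i' => Function.update β j x (Function.update a₀ i j i')) := by
  have hsum := sum_split_aux (i := i) (F := fun z : Fin n → Bool =>
    (1 / (2:ℝ) ^ n) * bval ((fun z => if z i then h z else g z)
      (fun i' => if i' ∈ T then β (a₀ i') else z i')))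
  simp only [Fintype.card_bool] at hsum
  have hL : UE (fun z => if z i then h z else g z) T (fun i' => β (a₀ i'))
      = (1/2) * ∑ x : Bool, ∑ z : Fin n → Bool,
        (1 / (2:ℝ) ^ n) * bval ((fun z => if z i then h z else g z)
          (fun i' => if i' ∈ T then β (a₀ i') else Function.update z i x i')) := by
    unfold UE
    rw [hsum]
    ring
  rw [hL]
  congr 1
  refine Finset.sum_congr rfl fun x _ => ?_
  unfold UE
  refine Finset.sum_congr rfl fun z _ => ?_
  rw [uinp_step hiT hjS hTS z x]
  have hz : (fun i' => if i' ∈ insert i T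
      then (Function.update β j x) ((Function.update a₀ i j) i') else z i') i = x := by
    show (if i ∈ insert i T
      then (Function.update β j x) ((Function.update a₀ i j) i) else z i) = x
    rw [if_pos (Finset.mem_insert_self i T), Function.update_self, Function.update_self]
  cases x <;> simp [hz] at hz ⊢ <;> simp [hz]

def CEj (K : ℕ) {n : ℕ} (f : (Fin n → Bool) → Bool) (T : Finset (Fin n))
    (S : Finset (Fin K)) (a₀ : Fin n → Fin K) (β : Fin K → Bool) (i : Fin n) (j : Fin K) : ℝ :=
  ∑ a : Fin n → Fin K, ∑ b : Fin K → Bool,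
    (1 / (K : ℝ) ^ n) * (1 / 2 ^ K) * bval (f (inp T S a₀ (Function.update a i j) β b))

lemma CE_split' (f : (Fin n → Bool) → Bool) (T : Finset (Fin n)) (S : Finset (Fin K))
    (a₀ : Fin n → Fin K) (β : Fin K → Bool) (i : Fin n) (hK : 0 < K) :
    CE K f T S a₀ β = (1 / (K:ℝ)) * ∑ j : Fin K, CEj K f T S a₀ β i j :=
  CE_split f T S a₀ β i hK

lemma node_step (hK : 0 < K) {k : ℕ} {g h : (Fin n → Bool) → Bool}
    (T : Finset (Fin n)) (S : Finset (Fin K)) (a₀ : Fin n → Fin K) (β : Fin K → Bool)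
    (i : Fin n) (hiT : i ∉ T) (hTS : ∀ i' ∈ T, a₀ i' ∈ S) (hc : S.card ≤ T.card)
    (IHg : ∀ (T : Finset (Fin n)) (S : Finset (Fin K)) (a₀ : Fin n → Fin K) (β : Fin K → Bool),
      (∀ i' ∈ T, a₀ i' ∈ S) → S.card ≤ T.card →
      |CE K g T S a₀ β - UE g T (fun i' => β (a₀ i'))| ≤
        (∑ m ∈ Finset.range k, ((T.card : ℝ) + m)) / K)
    (IHh : ∀ (T : Finset (Fin n)) (S : Finset (Fin K)) (a₀ : Fin n → Fin K) (β : Fin K → Bool),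
      (∀ i' ∈ T, a₀ i' ∈ S) → S.card ≤ T.card →
      |CE K h T S a₀ β - UE h T (fun i' => β (a₀ i'))| ≤
        (∑ m ∈ Finset.range k, ((T.card : ℝ) + m)) / K) :
    |CE K (fun z => if z i then h z else g z) T S a₀ β
      - UE (fun z => if z i then h z else g z) T (fun i' => β (a₀ i'))| ≤
      (∑ m ∈ Finset.range (k+1), ((T.card : ℝ) + m)) / K := by
  have hKpos : (0:ℝ) < K := by exact_mod_cast hK
  have hKne : ((K:ℝ)) ≠ 0 := ne_of_gt hKpos
  set c : ℝ := (T.card : ℝ) with hcdef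
  have hc0 : 0 ≤ c := by rw [hcdef]; positivity
  set Bn : ℝ := (∑ m ∈ Finset.range k, (c + 1 + (m:ℝ))) / K with hBn
  have hBn0 : 0 ≤ Bn := by
    rw [hBn]
    apply div_nonneg _ hKpos.le
    apply Finset.sum_nonneg; intro m _; positivity
  set f' : (Fin n → Bool) → Bool := fun z => if z i then h z else g z with hf'
  set D : ℝ := UE f' T (fun i' => β (a₀ i')) with hDdef
  have hD0 : 0 ≤ D := UE_nonneg _ _ _
  have hD1 : D ≤ 1 := UE_le_one _ _ _
  -- per-bucket bound
  have hperj : ∀ j : Fin K, |CEj K f' T S a₀ β i j - D| ≤ (if j ∈ S then (1:ℝ) else 0) + Bn := by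
    intro j
    by_cases hjS : j ∈ S
    · rw [if_pos hjS]
      have h0 : 0 ≤ CEj K f' T S a₀ β i j := CEtype_nonneg _
      have h1 : CEj K f' T S a₀ β i j ≤ 1 := CEtype_le_one hK _
      have := abs_diff_le_one h0 h1 hD0 hD1
      linarith
    · rw [if_neg hjS]
      have hC : CEj K f' T S a₀ β i j
          = (1/2) * ∑ x : Bool, CE K (if x then h else g) (insert i T) (insert j S)
              (Function.update a₀ i j) (Function.update β j x) :=
        CEj_eq g h hiT hjS hTS
      have hU : D = (1/2) * ∑ x : Bool, UE (if x then h else g) (insert i T)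
          (fun i' => Function.update β j x (Function.update a₀ i j i')) :=
        UE_split g h hiT hjS hTS
      have hstep : CEj K f' T S a₀ β i j - D = (1/2) * ∑ x : Bool,
          (CE K (if x then h else g) (insert i T) (insert j S)
              (Function.update a₀ i j) (Function.update β j x)
            - UE (if x then h else g) (insert i T)
              (fun i' => Function.update β j x (Function.update a₀ i j i'))) := by
        rw [hC, hU, Finset.sum_sub_distrib]
        ring
      have hcard' : (insert j S).card ≤ (insert i T).card := by
        rw [Finset.card_insert_of_notMem hjS, Finset.card_insert_of_notMem hiT]
        omega
      have hTS' : ∀ i' ∈ insert i T, Function.update a₀ i j i' ∈ insert j S := by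
        intro i' hi'
        rcases Finset.mem_insert.mp hi' with h1 | h1
        · subst h1; rw [Function.update_self]; exact Finset.mem_insert_self _ _
        · have hne : i' ≠ i := fun hcon => hiT (hcon ▸ h1)
          rw [Function.update_of_ne hne]
          exact Finset.mem_insert_of_mem (hTS i' h1)
      have hcast : (((insert i T).card : ℕ) : ℝ) = c + 1 := by
        rw [Finset.card_insert_of_notMem hiT, hcdef]; push_cast; ring
      have hb : (∑ m ∈ Finset.range k, (((insert i T).card : ℝ) + m)) / K = Bn := by
        rw [hBn]; congr 1
        refine Finset.sum_congr rfl fun m _ => ?_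
        rw [hcast]
      have hIH : ∀ x : Bool, |CE K (if x then h else g) (insert i T) (insert j S)
            (Function.update a₀ i j) (Function.update β j x)
          - UE (if x then h else g) (insert i T)
            (fun i' => Function.update β j x (Function.update a₀ i j i'))| ≤ Bn := by
        intro x
        cases x
        · exact hb ▸ IHg (insert i T) (insert j S) (Function.update a₀ i j)
            (Function.update β j false) hTS' hcard'
        · exact hb ▸ IHh (insert i T) (insert j S) (Function.update a₀ i j)
            (Function.update β j true) hTS' hcard'
      calc |CEj K f' T S a₀ β i j - D|
          = (1/2) * |∑ x : Bool, (CE K (if x then h else g) (insert i T) (insert j S)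
              (Function.update a₀ i j) (Function.update β j x)
            - UE (if x then h else g) (insert i T)
              (fun i' => Function.update β j x (Function.update a₀ i j i')))| := by
            rw [hstep, abs_mul]
            norm_num
        _ ≤ (1/2) * ∑ x : Bool, |CE K (if x then h else g) (insert i T) (insert j S)
              (Function.update a₀ i j) (Function.update β j x)
            - UE (if x then h else g) (insert i T)
              (fun i' => Function.update β j x (Function.update a₀ i j i'))| := by
            have := Finset.abs_sum_le_sum_abs
              (fun x : Bool => CE K (if x then h else g) (insert i T) (insert j S)
                (Function.update a₀ i j) (Function.update β j x)
              - UE (if x then h else g) (insert i T)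
                (fun i' => Function.update β j x (Function.update a₀ i j i'))) Finset.univ
            linarith
        _ ≤ (1/2) * ∑ _x : Bool, Bn := by
            have := Finset.sum_le_sum (fun x (_ : x ∈ (Finset.univ : Finset Bool)) => hIH x)
            linarith
        _ = Bn := by
            simp only [Finset.sum_const, Finset.card_univ, Fintype.card_bool, nsmul_eq_mul]
            ring
        _ = 0 + Bn := by ring
  -- combine over buckets
  have hsumCE : ∑ j : Fin K, CEj K f' T S a₀ β i j = K * CE K f' T S a₀ β := by
    rw [CE_split' f' T S a₀ β i hK]
    field_simp
  have hDsum : ∑ _j : Fin K, D = (K:ℝ) * D := by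
    simp only [Finset.sum_const, Finset.card_univ, Fintype.card_fin, nsmul_eq_mul]
  have hdiff : CE K f' T S a₀ β - D = (1/K) * ∑ j : Fin K, (CEj K f' T S a₀ β i j - D) := by
    rw [Finset.sum_sub_distrib, hsumCE, hDsum]
    field_simp
  have hSsum : ∑ j : Fin K, (if j ∈ S then (1:ℝ) else 0) = (S.card : ℝ) := by
    simp
  calc |CE K f' T S a₀ β - D|
      = (1/K) * |∑ j : Fin K, (CEj K f' T S a₀ β i j - D)| := by
        rw [hdiff, abs_mul, abs_of_pos (by positivity : (0:ℝ) < 1/K)]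
    _ ≤ (1/K) * ∑ j : Fin K, |CEj K f' T S a₀ β i j - D| := by
        have := Finset.abs_sum_le_sum_abs (fun j : Fin K => CEj K f' T S a₀ β i j - D) Finset.univ
        have h1K : (0:ℝ) ≤ 1/K := by positivity
        nlinarith
    _ ≤ (1/K) * ∑ j : Fin K, ((if j ∈ S then (1:ℝ) else 0) + Bn) := by
        have := Finset.sum_le_sum (fun j (_ : j ∈ (Finset.univ : Finset (Fin K))) => hperj j)
        have h1K : (0:ℝ) ≤ 1/K := by positivity
        nlinarith
    _ = (1/K) * ((S.card : ℝ) + K * Bn) := by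
        rw [Finset.sum_add_distrib, hSsum]
        simp only [Finset.sum_const, Finset.card_univ, Fintype.card_fin, nsmul_eq_mul]
    _ ≤ (1/K) * (c + K * Bn) := by
        have hSc : ((S.card : ℕ) : ℝ) ≤ c := by
          rw [hcdef]; exact_mod_cast hc
        have h1K : (0:ℝ) ≤ 1/K := by positivity
        nlinarith
    _ = (∑ m ∈ Finset.range (k+1), (c + (m:ℝ))) / K := by
        have hgoal : (∑ m ∈ Finset.range (k+1), (c + (m:ℝ)))
            = (∑ m ∈ Finset.range k, (c + 1 + (m:ℝ))) + c := by
          rw [Finset.sum_range_succ']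
          have hcg : ∀ m ∈ Finset.range k, (c + (((m+1) : ℕ):ℝ)) = (c + 1 + (m:ℝ)) := by
            intro m _; push_cast; ring
          rw [Finset.sum_congr rfl hcg]
          push_cast; ring
        rw [hgoal, hBn]
        field_simp
        ring

lemma main_lemma (hK : 0 < K) {k : ℕ} {f : (Fin n → Bool) → Bool} (hf : IsDT k f) :
    ∀ (T : Finset (Fin n)) (S : Finset (Fin K)) (a₀ : Fin n → Fin K) (β : Fin K → Bool),
      (∀ i ∈ T, a₀ i ∈ S) → S.card ≤ T.card →
      |CE K f T S a₀ β - UE f T (fun i => β (a₀ i))| ≤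
        (∑ m ∈ Finset.range k, ((T.card : ℝ) + m)) / K := by
  have hKpos : (0:ℝ) < K := by exact_mod_cast hK
  induction hf with
  | const k b =>
      intro T S a₀ β hTS hc
      have h1 : CE K (fun _ => b) T S a₀ β = bval b := by
        unfold CE
        simp only [Finset.sum_const, Finset.card_univ, nsmul_eq_mul, Fintype.card_fun,
          Fintype.card_fin, Fintype.card_bool]
        push_cast
        field_simp
      have h2 : UE (fun _ => b) T (fun i => β (a₀ i)) = bval b := by
        unfold UE
        simp only [Finset.sum_const, Finset.card_univ, nsmul_eq_mul, Fintype.card_fun,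
          Fintype.card_fin, Fintype.card_bool]
        push_cast
        field_simp
      rw [h1, h2, sub_self, abs_zero]
      exact bound_nonneg _ (by positivity) K
  | @node k g h i hg hh hgi hhi IHg IHh =>
      intro T S a₀ β hTS hc
      have hmono : (∑ m ∈ Finset.range k, ((T.card : ℝ) + m)) / K ≤
          (∑ m ∈ Finset.range (k+1), ((T.card : ℝ) + m)) / K := by
        have hs : (∑ m ∈ Finset.range k, ((T.card : ℝ) + m)) ≤
            ∑ m ∈ Finset.range (k+1), ((T.card : ℝ) + m) := by
          rw [Finset.sum_range_succ]
          exact le_add_of_nonneg_right (by positivity)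
        exact (div_le_div_iff_of_pos_right hKpos).mpr hs
      by_cases hiT : i ∈ T
      · -- the queried coordinate is already fixed
        have hS : a₀ i ∈ S := hTS i hiT
        cases hx : β (a₀ i) with
        | false =>
            have hCE : CE K (fun z => if z i then h z else g z) T S a₀ β
                = CE K g T S a₀ β := by
              unfold CE
              refine Finset.sum_congr rfl fun a _ => Finset.sum_congr rfl fun b _ => ?_
              have := inp_mem hiT hS a b (β := β)
              simp only [this, hx]
              simp
            have hUE : UE (fun z => if z i then h z else g z) T (fun i' => β (a₀ i'))
                = UE g T (fun i' => β (a₀ i')) := by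
              unfold UE
              refine Finset.sum_congr rfl fun z _ => ?_
              simp only [hiT, if_pos, hx]
              simp [hiT, hx]
            rw [hCE, hUE]
            exact le_trans (IHg T S a₀ β hTS hc) hmono
        | true =>
            have hCE : CE K (fun z => if z i then h z else g z) T S a₀ β
                = CE K h T S a₀ β := by
              unfold CE
              refine Finset.sum_congr rfl fun a _ => Finset.sum_congr rfl fun b _ => ?_
              have := inp_mem hiT hS a b (β := β)
              simp only [this, hx]
              simp
            have hUE : UE (fun z => if z i then h z else g z) T (fun i' => β (a₀ i'))
                = UE h T (fun i' => β (a₀ i')) := by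
              unfold UE
              refine Finset.sum_congr rfl fun z _ => ?_
              simp [hiT, hx]
            rw [hCE, hUE]
            exact le_trans (IHh T S a₀ β hTS hc) hmono
      · -- new coordinate queried
        exact node_step hK T S a₀ β i hiT hTS hc IHg IHh


/-- the bucketing distribution (random partition of `[n]` into `K`
buckets, each bucket given a uniform bit) fools depth-`k` decision trees to error
`k²/K`. -/
theorem bucketing_fools_decision_trees {n K k : ℕ} (hK : 0 < K)
    (f : (Fin n → Bool) → Bool) (hf : IsDT k f) :
    |(∑ a : Fin n → Fin K, ∑ b : Fin K → Bool,
        (1 / (K : ℝ) ^ n) * (1 / 2 ^ K) * bval (f (fun i => b (a i)))) -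
      Ex (uni n) f| ≤ (k : ℝ) ^ 2 / K := by
  have hKpos : (0:ℝ) < K := by exact_mod_cast hK
  have hCE : (∑ a : Fin n → Fin K, ∑ b : Fin K → Bool,
        (1 / (K : ℝ) ^ n) * (1 / 2 ^ K) * bval (f (fun i => b (a i))))
      = CE K f ∅ ∅ (fun _ => (⟨0, hK⟩ : Fin K)) (fun _ => false) := by
    unfold CE
    refine Finset.sum_congr rfl fun a _ => Finset.sum_congr rfl fun b _ => ?_
    congr 2
    try (funext i; simp [inp])
  have hUE : Ex (uni n) f
      = UE f (∅ : Finset (Fin n)) (fun i => (fun _ => false) ((fun _ => (⟨0, hK⟩ : Fin K)) i)) := by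
    unfold Ex UE uni
    refine Finset.sum_congr rfl fun z _ => ?_
    simp
  rw [hCE, hUE]
  refine (main_lemma hK hf ∅ ∅ (fun _ => (⟨0, hK⟩ : Fin K)) (fun _ => false)
    (by simp) (by simp)).trans ?_
  have hsum : (∑ m ∈ Finset.range k, (((∅ : Finset (Fin n)).card : ℝ) + m)) ≤ (k:ℝ)^2 := by
    simp only [Finset.card_empty, Nat.cast_zero, zero_add]
    calc ∑ m ∈ Finset.range k, (m:ℝ) ≤ ∑ _m ∈ Finset.range k, (k:ℝ) := by
          refine Finset.sum_le_sum fun m hm => ?_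
          exact_mod_cast (Finset.mem_range.mp hm).le
      _ = (k:ℝ) * k := by
          simp only [Finset.sum_const, Finset.card_range, nsmul_eq_mul]
      _ = (k:ℝ)^2 := by ring
  exact (div_le_div_iff_of_pos_right hKpos).mpr hsum
end
end
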